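/- The constants H_{|f|,m}^δ are continuous at δ = 0 along dyadic grids: lim_{n→∞} H_{|f|,m}^{2^{-n}} = H_{|f|,m}^0. -/

import Mathlib

open MeasureTheory ENNReal Filter Set Topology

/-- The set `ℚ_*` of dyadic rationals. -/
def dyadicSet : Set ℝ := {x | ∃ k : ℤ, ∃ n : ℕ, x = (k : ℝ) / 2 ^ n}

/-- The grid `δ ℤ^d` for `δ > 0`, with the convention that for `δ = 0` it is `ℚ_*^d`. -/
noncomputable def dyadicGrid (d : ℕ) (δ : ℝ) : Set (Fin d → ℝ) :=
  if δ = 0 then {t | ∀ i, t i ∈ dyadicSet} else {t | ∀ i, ∃ k : ℤ, t i = δ * k}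

/-- The cube `[0,T]^d`. -/
noncomputable def pickandsCube (d : ℕ) (T : ℝ) : Set (Fin d → ℝ) :=
  Set.Icc 0 (fun _ => T)

/-- `∫_E sup_{t ∈ S} |f_t(z)| m(dz)`. -/
noncomputable def isupFun {E : Type*} [MeasurableSpace E] (m : Measure E) {d : ℕ}
    (f : (Fin d → ℝ) → E → ℝ) (S : Set (Fin d → ℝ)) : ℝ≥0∞ :=
  ∫⁻ z, ⨆ t ∈ S, ENNReal.ofReal |f t z| ∂m

/-! Refining the grid can only increase the supremum, so `H^{2^{-n}} ≤ H^0`. Conversely,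
`[0,k]^d` is the union of `k^d` unit cubes `c + [0,1]^d` with `c ∈ {0,…,k-1}^d`. On each of them,
the loss incurred by replacing `ℚ_*^d` with `2^{-n}ℤ^d` has, by (genA), the same integral
`e_n = ∫ sup_{[0,1]^d ∩ ℚ_*^d} |f| - ∫ sup_{[0,1]^d ∩ 2^{-n}ℤ^d} |f|` as for `c = 0`; hence
`H^0 ≤ H^{2^{-n}} + e_n`. Finally `e_n → 0` by monotone convergence, because the grids
`2^{-n}ℤ^d` increase to `ℚ_*^d` and (norm2) makes the limit finite. -/

lemma intCast_mem_dyadicSet (k : ℤ) : (k : ℝ) ∈ dyadicSet := ⟨k, 0, by simp⟩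

lemma add_mem_dyadicSet {a b : ℝ} (ha : a ∈ dyadicSet) (hb : b ∈ dyadicSet) :
    a + b ∈ dyadicSet := by
  obtain ⟨k, n, rfl⟩ := ha
  obtain ⟨j, p, rfl⟩ := hb
  refine ⟨k * 2 ^ p + j * 2 ^ n, n + p, ?_⟩
  push_cast
  field_simp
  ring

lemma countable_dyadicSet : dyadicSet.Countable :=
  (countable_range fun p : ℤ × ℕ => (p.1 : ℝ) / 2 ^ p.2).mono <| by
    rintro _ ⟨k, n, rfl⟩
    exact ⟨(k, n), rfl⟩

lemma dyadicGrid_zero (d : ℕ) : dyadicGrid d 0 = {t | ∀ i, t i ∈ dyadicSet} :=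
  if_pos rfl

lemma dyadicGrid_two_pow_inv (d n : ℕ) :
    dyadicGrid d ((2 : ℝ) ^ n)⁻¹ = {t | ∀ i, ∃ k : ℤ, t i = (k : ℝ) / 2 ^ n} := by
  simp only [dyadicGrid, inv_eq_zero, pow_eq_zero_iff', two_ne_zero, false_and,
    if_false, inv_mul_eq_div]

lemma countable_dyadicGrid (d : ℕ) (δ : ℝ) : (dyadicGrid d δ).Countable := by
  unfold dyadicGrid
  split_ifs
  · exact (countable_pi fun _ => countable_dyadicSet).mono fun t ht => ht
  · refine (countable_range fun v : Fin d → ℤ => fun i => δ * v i).mono fun t ht => ?_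
    choose k hk using ht
    exact ⟨k, funext fun i => (hk i).symm⟩

lemma intCast_div_two_pow_eq {p N : ℕ} (h : p ≤ N) (k : ℤ) :
    (k : ℝ) / 2 ^ p = ((k * 2 ^ (N - p) : ℤ) : ℝ) / 2 ^ N := by
  obtain ⟨j, rfl⟩ := Nat.exists_eq_add_of_le h
  rw [Nat.add_sub_cancel_left, pow_add]
  push_cast
  field_simp

lemma monotone_dyadicGrid_two_pow_inv (d : ℕ) :
    Monotone fun n : ℕ => dyadicGrid d ((2 : ℝ) ^ n)⁻¹ := by
  intro n N h t ht
  simp only [dyadicGrid_two_pow_inv, mem_ofPred_eq] at ht ⊢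
  intro i
  obtain ⟨k, hk⟩ := ht i
  exact ⟨_, hk.trans (intCast_div_two_pow_eq h k)⟩

lemma iUnion_dyadicGrid_two_pow_inv (d : ℕ) :
    ⋃ n : ℕ, dyadicGrid d ((2 : ℝ) ^ n)⁻¹ = dyadicGrid d 0 := by
  simp only [dyadicGrid_two_pow_inv, dyadicGrid_zero]
  ext t
  simp only [mem_iUnion, mem_ofPred_eq]
  constructor
  · rintro ⟨n, ht⟩ i
    obtain ⟨k, hk⟩ := ht i
    exact ⟨k, n, hk⟩
  · intro ht
    choose k p hkp using ht
    refine ⟨Finset.univ.sup p, fun i => ⟨_, (hkp i).trans (intCast_div_two_pow_eq ?_ (k i))⟩⟩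
    exact Finset.le_sup (Finset.mem_univ i)

lemma dyadicGrid_two_pow_inv_subset_zero (d n : ℕ) :
    dyadicGrid d ((2 : ℝ) ^ n)⁻¹ ⊆ dyadicGrid d 0 :=
  iUnion_dyadicGrid_two_pow_inv d ▸ subset_iUnion (fun n : ℕ => dyadicGrid d ((2 : ℝ) ^ n)⁻¹) n

lemma add_intCast_mem_dyadicGrid_zero {d : ℕ} {t : Fin d → ℝ} (ht : t ∈ dyadicGrid d 0)
    (v : Fin d → ℤ) : t + (fun i => (v i : ℝ)) ∈ dyadicGrid d 0 := by
  rw [dyadicGrid_zero] at ht ⊢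
  exact fun i => add_mem_dyadicSet (ht i) (intCast_mem_dyadicSet (v i))

lemma add_intCast_mem_dyadicGrid_two_pow_inv {d n : ℕ} {t : Fin d → ℝ}
    (ht : t ∈ dyadicGrid d ((2 : ℝ) ^ n)⁻¹) (v : Fin d → ℤ) :
    t + (fun i => (v i : ℝ)) ∈ dyadicGrid d ((2 : ℝ) ^ n)⁻¹ := by
  rw [dyadicGrid_two_pow_inv] at ht ⊢
  intro i
  obtain ⟨k, hk⟩ := ht i
  refine ⟨k + v i * 2 ^ n, ?_⟩
  simp only [Pi.add_apply, hk]
  push_cast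
  field_simp

lemma mem_pickandsCube {d : ℕ} {T : ℝ} {t : Fin d → ℝ} :
    t ∈ pickandsCube d T ↔ ∀ i, 0 ≤ t i ∧ t i ≤ T := by
  simp only [pickandsCube, mem_Icc, Pi.le_def, Pi.zero_apply, forall_and]

lemma finite_pickandsCube_inter_dyadicGrid (d : ℕ) {δ : ℝ} (hδ : 0 < δ) (T : ℝ) :
    (pickandsCube d T ∩ dyadicGrid d δ).Finite := by
  refine ((finite_Icc (0 : Fin d → ℤ) fun _ => ⌊T / δ⌋).image
    fun v i => δ * v i).subset ?_
  rintro t ⟨htT, htδ⟩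
  rw [dyadicGrid, if_neg hδ.ne'] at htδ
  choose k hk using htδ
  have hbounds : ∀ i, 0 ≤ δ * k i ∧ δ * k i ≤ T := fun i => hk i ▸ mem_pickandsCube.1 htT i
  refine ⟨k, ⟨fun i => ?_, fun i => ?_⟩, funext fun i => (hk i).symm⟩
  · exact_mod_cast nonneg_of_mul_nonneg_right (hbounds i).1 hδ
  · exact Int.le_floor.2 ((le_div_iff₀ hδ).2 (by linarith [(hbounds i).2]))

lemma exists_sub_natCast_mem_pickandsCube_one {d k : ℕ} (hk : 1 ≤ k) {t : Fin d → ℝ}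
    (ht : t ∈ pickandsCube d k) :
    ∃ c : Fin d → Fin k, t - (fun i => ((c i : ℕ) : ℝ)) ∈ pickandsCube d 1 := by
  have hcoord : ∀ i, ∃ c : Fin k, (c : ℝ) ≤ t i ∧ t i ≤ c + 1 := by
    intro i
    obtain ⟨h0, hT⟩ := mem_pickandsCube.1 ht i
    by_cases hfl : ⌊t i⌋₊ < k
    · exact ⟨⟨_, hfl⟩, Nat.floor_le h0, (Nat.lt_floor_add_one (t i)).le⟩
    · refine ⟨⟨k - 1, by omega⟩, ?_, ?_⟩ <;> push_cast [hk]
      · have : (k : ℝ) ≤ ⌊t i⌋₊ := by exact_mod_cast not_lt.1 hfl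
        linarith [Nat.floor_le h0]
      · linarith
  choose c hc using hcoord
  refine ⟨c, mem_pickandsCube.2 fun i => ?_⟩
  simp only [Pi.sub_apply]
  constructor <;> linarith [hc i]

lemma natCast_add_mem_pickandsCube {d k : ℕ} {s : Fin d → ℝ} (hs : s ∈ pickandsCube d 1)
    (c : Fin d → Fin k) : s + (fun i => ((c i : ℕ) : ℝ)) ∈ pickandsCube d k := by
  refine mem_pickandsCube.2 fun i => ?_
  have hc : ((c i : ℕ) : ℝ) + 1 ≤ k := by exact_mod_cast (c i).isLt
  have := mem_pickandsCube.1 hs i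
  simp only [Pi.add_apply]
  constructor <;> linarith [Nat.cast_nonneg (α := ℝ) (c i : ℕ)]

lemma biSup_pickandsCube_le_add_sum_tsub {d k : ℕ} (hk : 1 ≤ k)
    (g : (Fin d → ℝ) → ℝ≥0∞) {A B : Set (Fin d → ℝ)}
    (hA : ∀ t ∈ A, ∀ v : Fin d → ℤ, t + (fun i => (v i : ℝ)) ∈ A)
    (hB : ∀ t ∈ B, ∀ v : Fin d → ℤ, t + (fun i => (v i : ℝ)) ∈ B) :
    ⨆ t ∈ pickandsCube d k ∩ B, g t ≤
      (⨆ t ∈ pickandsCube d k ∩ A, g t) +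
        ∑ c : Fin d → Fin k,
          ((⨆ s ∈ pickandsCube d 1 ∩ B, g (s + fun i => ((c i : ℕ) : ℝ))) -
            ⨆ s ∈ pickandsCube d 1 ∩ A, g (s + fun i => ((c i : ℕ) : ℝ))) := by
  refine iSup₂_le fun t ⟨htk, htB⟩ => ?_
  obtain ⟨c, hc⟩ := exists_sub_natCast_mem_pickandsCube_one hk htk
  set cvec : Fin d → ℝ := fun i => ((c i : ℕ) : ℝ)
  have hshift : ∀ S : Set (Fin d → ℝ), (∀ t ∈ S, ∀ v : Fin d → ℤ, t + (fun i => (v i : ℝ)) ∈ S) →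
      ∀ t ∈ S, t + cvec ∈ S ∧ t - cvec ∈ S := fun S hS t ht => by
    refine ⟨?_, ?_⟩
    · simpa using hS t ht fun i => (c i : ℤ)
    · convert hS t ht fun i => -(c i : ℤ) using 2
      ext i
      simp [cvec, sub_eq_add_neg]
  have hA_le : ⨆ s ∈ pickandsCube d 1 ∩ A, g (s + cvec) ≤ ⨆ t ∈ pickandsCube d k ∩ A, g t :=
    iSup₂_le fun s ⟨hs1, hsA⟩ =>
      le_biSup g ⟨natCast_add_mem_pickandsCube hs1 c, (hshift A hA s hsA).1⟩
  calc g t = g ((t - cvec) + cvec) := by rw [sub_add_cancel]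
    _ ≤ ⨆ s ∈ pickandsCube d 1 ∩ B, g (s + cvec) :=
        le_biSup (fun s => g (s + cvec)) ⟨hc, (hshift B hB t htB).2⟩
    _ ≤ ((⨆ s ∈ pickandsCube d 1 ∩ B, g (s + cvec)) -
          ⨆ s ∈ pickandsCube d 1 ∩ A, g (s + cvec)) + ⨆ t ∈ pickandsCube d k ∩ A, g t :=
        le_tsub_add.trans (add_le_add_right hA_le _)
    _ ≤ _ := by
        rw [add_comm]
        gcongr
        exact Finset.single_le_sum_of_canonicallyOrdered (M := ℝ≥0∞) (Finset.mem_univ c)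

section isupFun

variable {E : Type*} [MeasurableSpace E] {m : Measure E} {d : ℕ} {f : (Fin d → ℝ) → E → ℝ}

lemma isupFun_mono {S S' : Set (Fin d → ℝ)} (h : S ⊆ S') : isupFun m f S ≤ isupFun m f S' :=
  lintegral_mono fun _ => biSup_mono fun _ ht => h ht

lemma measurable_biSup_ofReal_abs (hf : ∀ t, Measurable (f t)) {S : Set (Fin d → ℝ)}
    (hS : S.Countable) : Measurable fun z => ⨆ t ∈ S, ENNReal.ofReal |f t z| :=
  Measurable.biSup S hS fun t _ => (hf t).abs.ennreal_ofReal

lemma tendsto_isupFun_iUnion (hf : ∀ t, Measurable (f t)) {S : ℕ → Set (Fin d → ℝ)}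
    (hS : ∀ n, (S n).Countable) (hmono : Monotone S) :
    Tendsto (fun n => isupFun m f (S n)) atTop (𝓝 (isupFun m f (⋃ n, S n))) := by
  have : isupFun m f (⋃ n, S n) = ⨆ n, isupFun m f (S n) := by
    simp only [isupFun, iSup_iUnion]
    exact lintegral_iSup (fun n => measurable_biSup_ofReal_abs hf (hS n))
      fun _ _ h z => biSup_mono fun _ ht => hmono h ht
  exact this ▸ tendsto_atTop_iSup fun _ _ h => isupFun_mono (hmono h)

lemma isupFun_pickandsCube_le_add_sum_tsub (hf : ∀ t, Measurable (f t))
    {A B : Set (Fin d → ℝ)} (hAB : A ⊆ B) (hAc : A.Countable) (hBc : B.Countable)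
    (hA : ∀ t ∈ A, ∀ v : Fin d → ℤ, t + (fun i => (v i : ℝ)) ∈ A)
    (hB : ∀ t ∈ B, ∀ v : Fin d → ℤ, t + (fun i => (v i : ℝ)) ∈ B) {k : ℕ} (hk : 1 ≤ k)
    (hfin : ∀ c : Fin d → Fin k,
      isupFun m (fun t z => f (t + fun i => ((c i : ℕ) : ℝ)) z) (pickandsCube d 1 ∩ A) ≠ ⊤) :
    isupFun m f (pickandsCube d k ∩ B) ≤
      isupFun m f (pickandsCube d k ∩ A) +
        ∑ c : Fin d → Fin k,
          (isupFun m (fun t z => f (t + fun i => ((c i : ℕ) : ℝ)) z) (pickandsCube d 1 ∩ B) -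
            isupFun m (fun t z => f (t + fun i => ((c i : ℕ) : ℝ)) z) (pickandsCube d 1 ∩ A)) := by
  have hmeas : ∀ (c : Fin d → ℝ) {S : Set (Fin d → ℝ)}, S.Countable →
      Measurable fun z => ⨆ t ∈ S, ENNReal.ofReal |f (t + c) z| :=
    fun c _ hS => measurable_biSup_ofReal_abs (f := fun t z => f (t + c) z) (fun t => hf _) hS
  calc isupFun m f (pickandsCube d k ∩ B)
      ≤ ∫⁻ z, ((⨆ t ∈ pickandsCube d k ∩ A, ENNReal.ofReal |f t z|) +
          ∑ c : Fin d → Fin k,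
            ((⨆ s ∈ pickandsCube d 1 ∩ B, ENNReal.ofReal |f (s + fun i => ((c i : ℕ) : ℝ)) z|) -
              ⨆ s ∈ pickandsCube d 1 ∩ A, ENNReal.ofReal |f (s + fun i => ((c i : ℕ) : ℝ)) z|))
          ∂m :=
        lintegral_mono fun z =>
          biSup_pickandsCube_le_add_sum_tsub hk (fun t => ENNReal.ofReal |f t z|) hA hB
    _ = _ := by
        rw [lintegral_add_left (measurable_biSup_ofReal_abs hf (hAc.mono inter_subset_right)),
          lintegral_finsetSum]
        · congr 1
          refine Finset.sum_congr rfl fun c _ => lintegral_sub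
            (hmeas _ (hAc.mono inter_subset_right)) (hfin c) (ae_of_all _ fun z => ?_)
          exact biSup_mono fun _ ht => inter_subset_inter_right _ hAB ht
        · exact fun c _ =>
            (hmeas _ (hBc.mono inter_subset_right)).sub (hmeas _ (hAc.mono inter_subset_right))

end isupFun

lemma isupFun_pickandsCube_dyadicGrid_zero_le {E : Type*} [MeasurableSpace E] {m : Measure E}
    {d : ℕ} {f : (Fin d → ℝ) → E → ℝ} (hf : ∀ t, Measurable (f t))
    (hfin : isupFun m f (pickandsCube d 1 ∩ dyadicGrid d 0) ≠ ⊤)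
    (hshift : ∀ K : Set (Fin d → ℝ), IsCompact K → ∀ c : Fin d → ℝ, (∀ i, c i ∈ dyadicSet) →
      isupFun m (fun t z => f (t + c) z) (K ∩ dyadicGrid d 0) =
        isupFun m f (K ∩ dyadicGrid d 0))
    (n : ℕ) {k : ℕ} (hk : 1 ≤ k) :
    isupFun m f (pickandsCube d k ∩ dyadicGrid d 0) ≤
      isupFun m f (pickandsCube d k ∩ dyadicGrid d ((2 : ℝ) ^ n)⁻¹) +
        (k : ℝ≥0∞) ^ d * (isupFun m f (pickandsCube d 1 ∩ dyadicGrid d 0) -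
          isupFun m f (pickandsCube d 1 ∩ dyadicGrid d ((2 : ℝ) ^ n)⁻¹)) := by
  have hsub := dyadicGrid_two_pow_inv_subset_zero d n
  have hdyadic : ∀ (c : Fin d → Fin k) i, ((c i : ℕ) : ℝ) ∈ dyadicSet :=
    fun c i => ⟨(c i : ℕ), 0, by simp⟩
  have hshift_zero : ∀ c : Fin d → Fin k,
      isupFun m (fun t z => f (t + fun i => ((c i : ℕ) : ℝ)) z)
          (pickandsCube d 1 ∩ dyadicGrid d 0) =
        isupFun m f (pickandsCube d 1 ∩ dyadicGrid d 0) :=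
    fun c => hshift _ isCompact_Icc _ (hdyadic c)
  -- the finite set `[0,1]^d ∩ 2^{-n} ℤ^d` is itself a compact `K` with `K ∩ ℚ_*^d = K`
  have hshift_two_pow_inv : ∀ c : Fin d → Fin k,
      isupFun m (fun t z => f (t + fun i => ((c i : ℕ) : ℝ)) z)
          (pickandsCube d 1 ∩ dyadicGrid d ((2 : ℝ) ^ n)⁻¹) =
        isupFun m f (pickandsCube d 1 ∩ dyadicGrid d ((2 : ℝ) ^ n)⁻¹) := by
    intro c
    have := hshift _
      (finite_pickandsCube_inter_dyadicGrid d (inv_pos.2 (pow_pos two_pos n)) 1).isCompact _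
      (hdyadic c)
    rwa [inter_eq_left.2 (inter_subset_right.trans hsub)] at this
  have := isupFun_pickandsCube_le_add_sum_tsub hf hsub (countable_dyadicGrid d _)
    (countable_dyadicGrid d 0) (fun _ ht v => add_intCast_mem_dyadicGrid_two_pow_inv ht v)
    (fun _ ht v => add_intCast_mem_dyadicGrid_zero ht v) hk fun c => by
      rw [hshift_two_pow_inv c]
      exact ne_top_of_le_ne_top hfin (isupFun_mono (inter_subset_inter_right _ hsub))
  simpa only [hshift_zero, hshift_two_pow_inv, Finset.sum_const, Finset.card_univ,
    Fintype.card_fun, Fintype.card_fin, nsmul_eq_mul, Nat.cast_pow] using this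

namespace ENNReal

lemma le_add_of_tendsto_div {ι : Type*} {l : Filter ι} [l.NeBot] {u v D : ι → ℝ≥0∞}
    {x y e : ℝ≥0∞} (hu : Tendsto (fun k => u k / D k) l (𝓝 x))
    (hv : Tendsto (fun k => v k / D k) l (𝓝 y)) (hD : ∀ᶠ k in l, D k ≠ 0 ∧ D k ≠ ⊤)
    (h : ∀ᶠ k in l, u k ≤ v k + D k * e) : x ≤ y + e := by
  refine le_of_tendsto_of_tendsto hu (hv.add tendsto_const_nhds) ?_
  filter_upwards [hD, h] with k ⟨hD0, hDtop⟩ hk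
  calc u k / D k ≤ (v k + D k * e) / D k := ENNReal.div_le_div_right hk _
    _ = v k / D k + e := by rw [ENNReal.add_div, ((ENNReal.eq_div_iff hD0 hDtop).2 rfl).symm]

lemma tendsto_of_le_of_le_add {ι : Type*} {l : Filter ι} {a e : ι → ℝ≥0∞} {b : ℝ≥0∞}
    (hab : ∀ i, a i ≤ b) (hba : ∀ i, b ≤ a i + e i) (he : Tendsto e l (𝓝 0)) :
    Tendsto a l (𝓝 b) := by
  have hlow : Tendsto (fun i => b - e i) l (𝓝 b) := by
    simpa using ENNReal.Tendsto.sub tendsto_const_nhds he (Or.inr zero_ne_top)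
  exact tendsto_of_tendsto_of_tendsto_of_le_of_le hlow tendsto_const_nhds
    (fun i => tsub_le_iff_right.2 (hba i)) hab

end ENNReal

theorem stable_pickands_constant_continuity_general
    {E : Type*} [MeasurableSpace E] (m : Measure E)
    (d : ℕ) (f : (Fin d → ℝ) → E → ℝ)
    (hmeas : ∀ t, Measurable (f t))
    (hnorm2 : ∀ K : Set (Fin d → ℝ), IsCompact K →
      isupFun m f (K ∩ dyadicGrid d 0) < ⊤)
    (hgenA : ∀ K : Set (Fin d → ℝ), IsCompact K → ∀ c : Fin d → ℝ,
      (∀ i, c i ∈ dyadicSet) →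
      isupFun m (fun t z => f (t + c) z) (K ∩ dyadicGrid d 0) =
        isupFun m f (K ∩ dyadicGrid d 0)) :
    ∀ H : ℝ → ℝ≥0∞,
      (∀ δ : ℝ, (δ = 0 ∨ ∃ n : ℕ, δ = ((2 : ℝ) ^ n)⁻¹) →
        Tendsto (fun T : ℝ =>
            isupFun m f (pickandsCube d T ∩ dyadicGrid d δ) / ENNReal.ofReal (T ^ d))
          atTop (𝓝 (H δ))) →
      Tendsto (fun n : ℕ => H (((2 : ℝ) ^ n)⁻¹)) atTop (𝓝 (H 0)) := by
  intro H hH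
  have hH0 := hH 0 (Or.inl rfl)
  have hHn : ∀ n : ℕ, _ := fun n => hH ((2 : ℝ) ^ n)⁻¹ (Or.inr ⟨n, rfl⟩)
  have hfin : isupFun m f (pickandsCube d 1 ∩ dyadicGrid d 0) ≠ ⊤ := (hnorm2 _ isCompact_Icc).ne
  have hconv : Tendsto (fun n : ℕ => isupFun m f (pickandsCube d 1 ∩ dyadicGrid d ((2 : ℝ) ^ n)⁻¹))
      atTop (𝓝 (isupFun m f (pickandsCube d 1 ∩ dyadicGrid d 0))) := by
    have := tendsto_isupFun_iUnion (m := m) hmeas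
      (S := fun n : ℕ => pickandsCube d 1 ∩ dyadicGrid d ((2 : ℝ) ^ n)⁻¹)
      (fun n => (countable_dyadicGrid d _).mono inter_subset_right)
      fun _ _ h => inter_subset_inter_right _ (monotone_dyadicGrid_two_pow_inv d h)
    rwa [← inter_iUnion, iUnion_dyadicGrid_two_pow_inv] at this
  refine ENNReal.tendsto_of_le_of_le_add (fun n => ?_) (fun n => ?_)
    (by simpa using ENNReal.Tendsto.sub tendsto_const_nhds hconv (Or.inl hfin))
  · exact le_of_tendsto_of_tendsto' (hHn n) hH0 fun T => ENNReal.div_le_div_right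
      (isupFun_mono (inter_subset_inter_right _ (dyadicGrid_two_pow_inv_subset_zero d n))) _
  · refine ENNReal.le_add_of_tendsto_div (hH0.comp tendsto_natCast_atTop_atTop)
      ((hHn n).comp tendsto_natCast_atTop_atTop) ?_ ?_ <;>
      filter_upwards [eventually_ge_atTop 1] with k hk <;>
      simp only [ENNReal.ofReal_pow (Nat.cast_nonneg _), ENNReal.ofReal_natCast]
    · exact ⟨pow_ne_zero _ (by exact_mod_cast (by omega : k ≠ 0)), pow_ne_top (natCast_ne_top k)⟩
    · exact isupFun_pickandsCube_dyadicGrid_zero_le hmeas hfin hgenA n hk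

/-- the constants `H_{|f|,m}^δ` are continuous at `δ = 0` along dyadic
grids: `lim_{n→∞} H_{|f|,m}^{2^{-n}} = H_{|f|,m}^0`. -/
theorem stable_pickands_constant_continuity
    {E : Type*} [MeasurableSpace E] (m : Measure E) [SigmaFinite m]
    (d : ℕ) (hd : 0 < d) (f : (Fin d → ℝ) → E → ℝ)
    (hmeas : ∀ t, Measurable (f t))
    (hint : ∀ t, (∫⁻ z, ENNReal.ofReal |f t z| ∂m) < ⊤)
    (hnorm2 : ∀ K : Set (Fin d → ℝ), IsCompact K →
      isupFun m f (K ∩ dyadicGrid d 0) < ⊤)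
    (hgenA : ∀ K : Set (Fin d → ℝ), IsCompact K → ∀ c : Fin d → ℝ,
      (∀ i, c i ∈ dyadicSet) →
      isupFun m (fun t z => f (t + c) z) (K ∩ dyadicGrid d 0) =
        isupFun m f (K ∩ dyadicGrid d 0)) :
    ∀ H : ℝ → ℝ≥0∞,
      (∀ δ : ℝ, (δ = 0 ∨ ∃ n : ℕ, δ = ((2 : ℝ) ^ n)⁻¹) →
        Tendsto (fun T : ℝ =>
            isupFun m f (pickandsCube d T ∩ dyadicGrid d δ) / ENNReal.ofReal (T ^ d))
          atTop (𝓝 (H δ))) →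
      Tendsto (fun n : ℕ => H (((2 : ℝ) ^ n)⁻¹)) atTop (𝓝 (H 0)) :=
  stable_pickands_constant_continuity_general m d f hmeas hnorm2 hgenA
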